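/- arXiv:1703.03660 — 2 statements merged into one kernel-verified Lean document; each statement's English description precedes it below -/
import Mathlib

section
/- Let F be a J-frame for a Krein space H with J-frame operator S, and define S₊ f = Σ_{i∈I₊} [f,f_i] f_i and S₋ f = Σ_{i∈I₋} [f,f_i] f_i. Then S₊ is the minimum (with respect to the order induced by J-positive operators) of the set of J-selfadjoint operators X with S ≤_J X and R(X) ⊆ M₊; and −S₋ is the maximum of the set of J-selfadjoint operators Y with Y ≤_J S and R(Y) ⊆ M₋. -/
noncomputable section

open scoped Classical

open Function

/-- The indefinite inner product `[x,y] = ⟨Jx, y⟩` induced by an operator `J`. -/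
def kre {E : Type*} [NormedAddCommGroup E] [InnerProductSpace ℂ E]
    (J : E →L[ℂ] E) (x y : E) : ℂ := @inner ℂ _ _ (J x) y

/-- `J` is a fundamental symmetry: a selfadjoint unitary (involutive) operator. -/
def IsFundSym {E : Type*} [NormedAddCommGroup E] [InnerProductSpace ℂ E] [CompleteSpace E]
    (J : E →L[ℂ] E) : Prop :=
  IsSelfAdjoint J ∧ J.comp J = ContinuousLinearMap.id ℂ E

/-- The J-orthogonal companion of a subspace. -/
def JorthCompanion {E : Type*} [NormedAddCommGroup E] [InnerProductSpace ℂ E]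
    (J : E →L[ℂ] E) (S : Submodule ℂ E) : Submodule ℂ E where
  carrier := {x | ∀ s ∈ S, kre J x s = 0}
  zero_mem' := by intro s hs; simp [kre]
  add_mem' := by
    intro a b ha hb s hs
    have h1 := ha s hs
    have h2 := hb s hs
    simp only [kre, map_add, inner_add_left] at h1 h2 ⊢
    rw [h1, h2, add_zero]
  smul_mem' := by
    intro c x hx s hs
    have h1 := hx s hs
    simp only [kre, map_smul, inner_smul_left] at h1 ⊢
    rw [h1, mul_zero]

/-- Uniformly J-positive subspace. -/
def UnifJPos {E : Type*} [NormedAddCommGroup E] [InnerProductSpace ℂ E]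
    (J : E →L[ℂ] E) (S : Submodule ℂ E) : Prop :=
  ∃ α : ℝ, 0 < α ∧ ∀ x ∈ S, α * ‖x‖ ^ 2 ≤ (kre J x x).re

/-- Uniformly J-negative subspace. -/
def UnifJNeg {E : Type*} [NormedAddCommGroup E] [InnerProductSpace ℂ E]
    (J : E →L[ℂ] E) (S : Submodule ℂ E) : Prop :=
  ∃ α : ℝ, 0 < α ∧ ∀ x ∈ S, (kre J x x).re ≤ -(α * ‖x‖ ^ 2)

/-- Maximal uniformly J-positive subspace. -/
def MaxUnifJPos {E : Type*} [NormedAddCommGroup E] [InnerProductSpace ℂ E]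
    (J : E →L[ℂ] E) (S : Submodule ℂ E) : Prop :=
  UnifJPos J S ∧ ∀ S' : Submodule ℂ E, UnifJPos J S' → S ≤ S' → S' = S

/-- Maximal uniformly J-negative subspace. -/
def MaxUnifJNeg {E : Type*} [NormedAddCommGroup E] [InnerProductSpace ℂ E]
    (J : E →L[ℂ] E) (S : Submodule ℂ E) : Prop :=
  UnifJNeg J S ∧ ∀ S' : Submodule ℂ E, UnifJNeg J S' → S ≤ S' → S' = S

/-- J-selfadjoint operator (with respect to the indefinite inner product of `J`). -/
def IsJSelfAdj {E : Type*} [NormedAddCommGroup E] [InnerProductSpace ℂ E]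
    (J : E →L[ℂ] E) (A : E →L[ℂ] E) : Prop :=
  ∀ x y : E, kre J (A x) y = kre J x (A y)

/-- The J-order: `A ≤_J B` iff `B - A` is J-positive. -/
def JLe {E : Type*} [NormedAddCommGroup E] [InnerProductSpace ℂ E]
    (J : E →L[ℂ] E) (A B : E →L[ℂ] E) : Prop :=
  ∀ x : E, 0 ≤ (kre J (B x - A x) x).re ∧ (kre J (B x - A x) x).im = 0

/-- The subspace of `ℓ²(I)` supported on a subset (given by a predicate) of `I`. -/
def suppSub {I : Type*} (A : I → Prop) : Submodule ℂ (lp (fun _ : I => ℂ) 2) where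
  carrier := {x | ∀ i, ¬ A i → x i = 0}
  zero_mem' := by intro i _; rfl
  add_mem' := by
    intro a b ha hb i hi
    have : (↑(a + b) : ∀ i, ℂ) i = a i + b i := by
      rw [lp.coeFn_add]; rfl
    simp [this, ha i hi, hb i hi]
  smul_mem' := by
    intro c x hx i hi
    have : (↑(c • x) : ∀ i, ℂ) i = c • x i := by
      rw [lp.coeFn_smul]; rfl
    simp [this, hx i hi]

variable {H : Type*} [NormedAddCommGroup H] [InnerProductSpace ℂ H] [CompleteSpace H]
variable {I : Type*} [DecidableEq I]

/-- `i` is a "positive index" for the family `f` w.r.t. `J`: `[f i, f i] ≥ 0`. -/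
def posIdx {H : Type*} [NormedAddCommGroup H] [InnerProductSpace ℂ H]
    (J : H →L[ℂ] H) (f : I → H) (i : I) : Prop := 0 ≤ (kre J (f i) (f i)).re

/-- The sign `σ_i = sgn [f i, f i]` (as a complex scalar, `+1` on `I₊` and `-1` on `I₋`). -/
def sgnv {H : Type*} [NormedAddCommGroup H] [InnerProductSpace ℂ H]
    (J : H →L[ℂ] H) (f : I → H) (i : I) : ℂ := if posIdx J f i then 1 else -1

/-- Closure of the span of the vectors of the family `h` with positive indices (signs taken
from the family `f`). -/
def posSpan {H : Type*} [NormedAddCommGroup H] [InnerProductSpace ℂ H]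
    (J : H →L[ℂ] H) (f h : I → H) : Submodule ℂ H :=
  (Submodule.span ℂ {x | ∃ i, posIdx J f i ∧ h i = x}).topologicalClosure

/-- Closure of the span of the vectors of the family `h` with negative indices. -/
def negSpan {H : Type*} [NormedAddCommGroup H] [InnerProductSpace ℂ H]
    (J : H →L[ℂ] H) (f h : I → H) : Submodule ℂ H :=
  (Submodule.span ℂ {x | ∃ i, ¬ posIdx J f i ∧ h i = x}).topologicalClosure

/-- A Bessel family in a Hilbert space. -/
def IsBessel {H : Type*} [NormedAddCommGroup H] [InnerProductSpace ℂ H]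
    (g : I → H) : Prop :=
  ∃ β : ℝ, ∀ (x : H) (s : Finset I),
    ∑ i ∈ s, ‖@inner ℂ _ _ (g i) x‖ ^ 2 ≤ β * ‖x‖ ^ 2

/-- `g` is a dual family for `f`: the signs coincide and the two indefinite
reconstruction formulas hold. -/
def IsDualFamily {H : Type*} [NormedAddCommGroup H] [InnerProductSpace ℂ H]
    (J : H →L[ℂ] H) (f g : I → H) : Prop :=
  (∀ i, Real.sign ((kre J (g i) (g i)).re) = Real.sign ((kre J (f i) (f i)).re)) ∧
  (∀ x : H, HasSum (fun i => (sgnv J f i * kre J x (f i)) • g i) x) ∧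
  (∀ x : H, HasSum (fun i => (sgnv J f i * kre J x (g i)) • f i) x)

/-!
`S₊ - S = S₋` and `S + S₋ = S₊` are `J`-positive, since `[S_± x, x] = ‖P_± T⁺x‖²`. For
minimality, the maximal uniformly definite subspaces `M₊`, `M₋` are closed and complementary,
so the projection `Q` onto `M₊` along `M₋` is bounded. If `X` is `J`-selfadjoint with range in
`M₊`, the vector `Q⁺x` pairs with `M₊` as `x` does and is `J`-orthogonal to `M₋`, which gives
`[(X - S₊)x, x] = [(X - S)Q⁺x, Q⁺x] ≥ 0`. Maximality of `-S₋` is the same argument with `I - Q`.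
-/

open scoped ComplexOrder

theorem IsIdempotentElem.reflection_mul_self {R : Type*} [Ring R] {p : R}
    (hp : IsIdempotentElem p) : (p - (1 - p)) * p = p := by
  rw [sub_mul, sub_mul, one_mul, hp.eq]
  abel

theorem IsIdempotentElem.reflection_mul_one_sub {R : Type*} [Ring R] {p : R}
    (hp : IsIdempotentElem p) : (p - (1 - p)) * (1 - p) = -(1 - p) := by
  rw [mul_sub, mul_one, reflection_mul_self hp]
  abel

section Krein

variable {E : Type*} [NormedAddCommGroup E] [InnerProductSpace ℂ E] {J : E →L[ℂ] E}

theorem kre_add_left (x y z : E) : kre J (x + y) z = kre J x z + kre J y z := by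
  simp only [kre, map_add, inner_add_left]

theorem kre_sub_left (x y z : E) : kre J (x - y) z = kre J x z - kre J y z := by
  simp only [kre, map_sub, inner_sub_left]

theorem kre_conj_symm [CompleteSpace E] (hJ : IsSelfAdjoint J) (x y : E) :
    starRingEnd ℂ (kre J x y) = kre J y x := by
  rw [kre, kre, inner_conj_symm]
  exact (hJ.isSymmetric y x).symm

theorem continuous_kre_self : Continuous fun x : E => kre J x x :=
  J.continuous.inner continuous_id

theorem jLe_iff {A B : E →L[ℂ] E} : JLe J A B ↔ ∀ x, 0 ≤ kre J (B x - A x) x := by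
  simp only [JLe, Complex.nonneg_iff, eq_comm (a := (0 : ℝ))]

theorem jLe_neg_neg {A B : E →L[ℂ] E} : JLe J (-B) (-A) ↔ JLe J A B := by
  simp only [JLe, neg_apply, sub_neg_eq_add, neg_add_eq_sub]

theorem IsJSelfAdj.neg {A : E →L[ℂ] E} (hA : IsJSelfAdj J A) : IsJSelfAdj J (-A) := by
  intro x y
  simp only [kre, neg_apply, map_neg, inner_neg_left, inner_neg_right]
  exact congrArg Neg.neg (hA x y)

theorem UnifJPos.topologicalClosure {M : Submodule ℂ E} (hM : UnifJPos J M) :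
    UnifJPos J M.topologicalClosure := by
  obtain ⟨α, hα, hαM⟩ := hM
  have hcl : IsClosed {x : E | α * ‖x‖ ^ 2 ≤ (kre J x x).re} :=
    isClosed_le (by fun_prop) (Complex.continuous_re.comp continuous_kre_self)
  exact ⟨α, hα, fun x hx => hcl.closure_subset_iff.mpr hαM (M.topologicalClosure_coe ▸ hx)⟩

theorem UnifJNeg.topologicalClosure {M : Submodule ℂ E} (hM : UnifJNeg J M) :
    UnifJNeg J M.topologicalClosure := by
  obtain ⟨α, hα, hαM⟩ := hM
  have hcl : IsClosed {x : E | (kre J x x).re ≤ -(α * ‖x‖ ^ 2)} :=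
    isClosed_le (Complex.continuous_re.comp continuous_kre_self) (by fun_prop)
  exact ⟨α, hα, fun x hx => hcl.closure_subset_iff.mpr hαM (M.topologicalClosure_coe ▸ hx)⟩

theorem MaxUnifJPos.isClosed {M : Submodule ℂ E} (hM : MaxUnifJPos J M) :
    IsClosed (M : Set E) := by
  have hcl := M.isClosed_topologicalClosure
  rwa [hM.2 _ hM.1.topologicalClosure M.le_topologicalClosure] at hcl

theorem MaxUnifJNeg.isClosed {M : Submodule ℂ E} (hM : MaxUnifJNeg J M) :
    IsClosed (M : Set E) := by
  have hcl := M.isClosed_topologicalClosure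
  rwa [hM.2 _ hM.1.topologicalClosure M.le_topologicalClosure] at hcl

theorem UnifJPos.disjoint {M N : Submodule ℂ E} (hM : UnifJPos J M) (hN : UnifJNeg J N) :
    Disjoint M N := by
  obtain ⟨α, hα, hαM⟩ := hM
  obtain ⟨β, hβ, hβN⟩ := hN
  refine Submodule.disjoint_def.mpr fun x hxM hxN => ?_
  have h : (α + β) * ‖x‖ ^ 2 ≤ 0 := by linarith [hαM x hxM, hβN x hxN]
  have : ‖x‖ ^ 2 ≤ 0 := nonpos_of_mul_nonpos_right h (by linarith)
  simpa using this

def jAdjoint [CompleteSpace E] (J Q : E →L[ℂ] E) : E →L[ℂ] E :=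
  J.comp ((ContinuousLinearMap.adjoint Q).comp J)

theorem kre_jAdjoint [CompleteSpace E] (hJ : IsFundSym J) (Q : E →L[ℂ] E) (x y : E) :
    kre J x (jAdjoint J Q y) = kre J (Q x) y := by
  have hJJ : ∀ z, J (J z) = z := fun z => congrArg (· z) hJ.2
  have hJsymm : ∀ a b, inner ℂ (J a) b = inner ℂ a (J b) := hJ.1.isSymmetric
  calc kre J x (jAdjoint J Q y) = inner ℂ x (ContinuousLinearMap.adjoint Q (J y)) := by
        rw [kre, jAdjoint, ContinuousLinearMap.comp_apply, ContinuousLinearMap.comp_apply,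
          hJsymm, hJJ]
    _ = kre J (Q x) y := by rw [ContinuousLinearMap.adjoint_inner_right, ← hJsymm]; rfl

end Krein

section Extremal

variable {E : Type*} [NormedAddCommGroup E] [InnerProductSpace ℂ E] [CompleteSpace E]
  {J : E →L[ℂ] E} {M N : Submodule ℂ E} {A B X : E →L[ℂ] E}

theorem jLe_of_add_jLe (hJ : IsFundSym J) (hMN : M.IsTopCompl N)
    (hA : IsJSelfAdj J A) (hAM : LinearMap.range (A : E →ₗ[ℂ] E) ≤ M)
    (hBN : LinearMap.range (B : E →ₗ[ℂ] E) ≤ N)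
    (hX : IsJSelfAdj J X) (hXM : LinearMap.range (X : E →ₗ[ℂ] E) ≤ M)
    (hABX : JLe J (A + B) X) : JLe J A X := by
  rw [jLe_iff] at hABX ⊢
  intro x
  set b := jAdjoint J (M.projectionL N hMN) x
  have hbM : ∀ m ∈ M, kre J m b = kre J m x := fun m hm => by
    rw [kre_jAdjoint hJ, (Submodule.projectionL_eq_self_iff hMN m).mpr hm]
  have hbN : ∀ m ∈ N, kre J m b = 0 := fun m hm => by
    rw [kre_jAdjoint hJ, Submodule.projectionL_apply_eq_zero_of_mem_right hMN hm, kre, map_zero,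
      inner_zero_left]
  have hbM' : ∀ m ∈ M, kre J b m = kre J x m := fun m hm => by
    rw [← kre_conj_symm hJ.1, hbM m hm, kre_conj_symm hJ.1]
  have hXb : kre J (X b) b = kre J (X x) x :=
    calc kre J (X b) b = kre J b (X b) := hX b b
      _ = kre J x (X b) := hbM' (X b) (hXM (LinearMap.mem_range_self _ b))
      _ = kre J (X x) b := (hX x b).symm
      _ = kre J (X x) x := hbM (X x) (hXM (LinearMap.mem_range_self _ x))
  have hABb : kre J ((A + B) b) b = kre J (A x) x :=
    calc kre J ((A + B) b) b = kre J (A b) b + kre J (B b) b := kre_add_left _ _ _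
      _ = kre J (A b) x := by
        rw [hbN (B b) (hBN (LinearMap.mem_range_self _ b)), add_zero,
          hbM (A b) (hAM (LinearMap.mem_range_self _ b))]
      _ = kre J b (A x) := hA b x
      _ = kre J x (A x) := hbM' (A x) (hAM (LinearMap.mem_range_self _ x))
      _ = kre J (A x) x := (hA x x).symm
  simpa only [kre_sub_left, hXb, hABb] using hABX b

theorem jLe_of_jLe_add (hJ : IsFundSym J) (hMN : M.IsTopCompl N)
    (hA : IsJSelfAdj J A) (hAM : LinearMap.range (A : E →ₗ[ℂ] E) ≤ M)
    (hBN : LinearMap.range (B : E →ₗ[ℂ] E) ≤ N)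
    (hX : IsJSelfAdj J X) (hXM : LinearMap.range (X : E →ₗ[ℂ] E) ≤ M)
    (hXAB : JLe J X (A + B)) : JLe J X A := by
  rw [← jLe_neg_neg] at hXAB ⊢
  refine jLe_of_add_jLe hJ hMN hA.neg ?_ ?_ hX.neg ?_ (by rwa [neg_add] at hXAB) <;>
    simpa only [ContinuousLinearMap.toLinearMap_neg, LinearMap.range_neg]

end Extremal

section Synthesis

variable {E G : Type*} [NormedAddCommGroup E] [InnerProductSpace ℂ E]
  [NormedAddCommGroup G] [InnerProductSpace ℂ G]
  {J : E →L[ℂ] E} {J₂ : G →L[ℂ] G} {T : G →L[ℂ] E} {T' : E →L[ℂ] G}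

theorem isJSelfAdj_comp_comp [CompleteSpace E] [CompleteSpace G] (hJ : IsSelfAdjoint J)
    (hT' : ∀ u y, kre J (T u) y = kre J₂ u (T' y)) {R : G →L[ℂ] G}
    (hR : IsSelfAdjoint (J₂ * R)) : IsJSelfAdj J (T.comp (R.comp T')) := by
  intro x y
  change kre J (T (R (T' x))) y = kre J x (T (R (T' y)))
  rw [← kre_conj_symm hJ (T (R (T' y))), hT', hT', kre, kre, inner_conj_symm]
  exact hR.isSymmetric (T' x) (T' y)

theorem jLe_of_sub_eq_comp_comp (hT' : ∀ u y, kre J (T u) y = kre J₂ u (T' y))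
    {R : G →L[ℂ] G} (hR : (J₂ * R).IsPositive) {A B : E →L[ℂ] E}
    (hAB : B - A = T.comp (R.comp T')) : JLe J A B := by
  rw [jLe_iff]
  intro x
  rw [← sub_apply, hAB, ContinuousLinearMap.comp_apply,
    ContinuousLinearMap.comp_apply, hT']
  exact hR.inner_nonneg_left (T' x)

end Synthesis

theorem codisjoint_range_comp_one_sub {E G : Type*} [NormedAddCommGroup E] [NormedSpace ℂ E]
    [NormedAddCommGroup G] [NormedSpace ℂ G] {T : G →L[ℂ] E} (hT : Surjective T) (P : G →L[ℂ] G) :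
    Codisjoint (LinearMap.range (T.comp P : G →ₗ[ℂ] E))
      (LinearMap.range (T.comp (1 - P) : G →ₗ[ℂ] E)) := by
  rw [codisjoint_iff, eq_top_iff]
  rintro x -
  obtain ⟨u, rfl⟩ := hT x
  have hu : T u = T (P u) + T ((1 - P) u) := by simp
  rw [hu]
  exact Submodule.add_mem_sup (LinearMap.mem_range_self _ u) (LinearMap.mem_range_self _ u)

section CoordinateProjection

variable {ι : Type*} {p : ι → Prop} {P P' : lp (fun _ : ι => ℂ) 2 →L[ℂ] lp (fun _ : ι => ℂ) 2}

theorem isStarProjection_of_apply (hP : ∀ x i, P x i = if p i then x i else 0) :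
    IsStarProjection P where
  isIdempotentElem := by
    ext x i
    simp only [mul_apply_eq_comp, hP]
    split_ifs <;> rfl
  isSelfAdjoint := by
    rw [ContinuousLinearMap.isSelfAdjoint_iff_isSymmetric]
    intro x y
    rw [ContinuousLinearMap.coe_coe, lp.inner_eq_tsum, lp.inner_eq_tsum]
    refine tsum_congr fun i => ?_
    rw [hP, hP]
    split_ifs <;> simp

theorem eq_one_sub_of_apply (hP : ∀ x i, P x i = if p i then x i else 0)
    (hP' : ∀ x i, P' x i = if p i then 0 else x i) : P' = 1 - P := by
  ext x i
  rw [hP', sub_apply, lp.coeFn_sub, Pi.sub_apply, hP]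
  split_ifs <;> simp

end CoordinateProjection

theorem jframe_extremal_jpositive_parts_general
    (J : H →L[ℂ] H) (hJ : IsFundSym J) (f : I → H)
    (T : lp (fun _ : I => ℂ) 2 →L[ℂ] H)
    (hTsurj : Function.Surjective T)
    (Pp Pm : lp (fun _ : I => ℂ) 2 →L[ℂ] lp (fun _ : I => ℂ) 2)
    (hPp : ∀ (x : lp (fun _ : I => ℂ) 2) (i : I), Pp x i = if posIdx J f i then x i else 0)
    (hPm : ∀ (x : lp (fun _ : I => ℂ) 2) (i : I), Pm x i = if posIdx J f i then 0 else x i)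
    (hJF : MaxUnifJPos J (LinearMap.range (T.comp Pp : lp (fun _ : I => ℂ) 2 →ₗ[ℂ] H)) ∧
      MaxUnifJNeg J (LinearMap.range (T.comp Pm : lp (fun _ : I => ℂ) 2 →ₗ[ℂ] H)))
    (Tp : H →L[ℂ] lp (fun _ : I => ℂ) 2)
    (hTp : ∀ (x : lp (fun _ : I => ℂ) 2) (y : H), kre J (T x) y = kre (Pp - Pm) x (Tp y)) :
    (IsJSelfAdj J (T.comp (Pp.comp Tp)) ∧
      JLe J (T.comp Tp) (T.comp (Pp.comp Tp)) ∧
      LinearMap.range (T.comp (Pp.comp Tp) : H →ₗ[ℂ] H) ≤ LinearMap.range (T.comp Pp : lp (fun _ : I => ℂ) 2 →ₗ[ℂ] H) ∧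
      (∀ X : H →L[ℂ] H, IsJSelfAdj J X → JLe J (T.comp Tp) X →
        LinearMap.range (X : H →ₗ[ℂ] H) ≤ LinearMap.range (T.comp Pp : lp (fun _ : I => ℂ) 2 →ₗ[ℂ] H) →
          JLe J (T.comp (Pp.comp Tp)) X)) ∧
    (IsJSelfAdj J (T.comp (Pm.comp Tp)) ∧
      JLe J (T.comp (Pm.comp Tp)) (T.comp Tp) ∧
      LinearMap.range (T.comp (Pm.comp Tp) : H →ₗ[ℂ] H) ≤ LinearMap.range (T.comp Pm : lp (fun _ : I => ℂ) 2 →ₗ[ℂ] H) ∧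
      (∀ Y : H →L[ℂ] H, IsJSelfAdj J Y → JLe J Y (T.comp Tp) →
        LinearMap.range (Y : H →ₗ[ℂ] H) ≤ LinearMap.range (T.comp Pm : lp (fun _ : I => ℂ) 2 →ₗ[ℂ] H) →
          JLe J Y (T.comp (Pm.comp Tp)))) := by
  have hPp_proj : IsStarProjection Pp := isStarProjection_of_apply hPp
  obtain rfl : Pm = 1 - Pp := eq_one_sub_of_apply hPp hPm
  have hPm_proj : IsStarProjection (1 - Pp) := hPp_proj.one_sub
  have hS : T.comp Tp = T.comp (Pp.comp Tp) + T.comp ((1 - Pp).comp Tp) := by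
    ext x; simp
  have hSp : IsJSelfAdj J (T.comp (Pp.comp Tp)) := isJSelfAdj_comp_comp hJ.1 hTp
    (by rw [hPp_proj.isIdempotentElem.reflection_mul_self]; exact hPp_proj.isSelfAdjoint)
  have hSm : IsJSelfAdj J (T.comp ((1 - Pp).comp Tp)) := isJSelfAdj_comp_comp hJ.1 hTp
    (by rw [hPp_proj.isIdempotentElem.reflection_mul_one_sub]; exact hPm_proj.isSelfAdjoint.neg)
  have hSp_range := LinearMap.range_comp_le_range (Tp : H →ₗ[ℂ] lp (fun _ : I => ℂ) 2)
    (T.comp Pp : lp (fun _ : I => ℂ) 2 →ₗ[ℂ] H)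
  have hSm_range := LinearMap.range_comp_le_range (Tp : H →ₗ[ℂ] lp (fun _ : I => ℂ) 2)
    (T.comp (1 - Pp) : lp (fun _ : I => ℂ) 2 →ₗ[ℂ] H)
  have hcompl : Submodule.IsTopCompl
      (LinearMap.range (T.comp Pp : lp (fun _ : I => ℂ) 2 →ₗ[ℂ] H))
      (LinearMap.range (T.comp (1 - Pp) : lp (fun _ : I => ℂ) 2 →ₗ[ℂ] H)) :=
    Submodule.isTopCompl_iff_isCompl_isClosed.mpr
      ⟨⟨hJF.1.1.disjoint hJF.2.1, codisjoint_range_comp_one_sub hTsurj Pp⟩,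
        hJF.1.isClosed, hJF.2.isClosed⟩
  refine ⟨⟨hSp, ?_, hSp_range, fun X hX hSX hXr => ?_⟩,
    ⟨hSm, ?_, hSm_range, fun Y hY hYS hYr => ?_⟩⟩
  · refine jLe_of_sub_eq_comp_comp hTp (R := -(1 - Pp)) ?_ ?_
    · rw [mul_neg, hPp_proj.isIdempotentElem.reflection_mul_one_sub, neg_neg]
      exact ContinuousLinearMap.IsPositive.of_isStarProjection hPm_proj
    · rw [hS, sub_add_cancel_left, ContinuousLinearMap.neg_comp, ContinuousLinearMap.comp_neg]
  · exact jLe_of_add_jLe hJ hcompl hSp hSp_range hSm_range hX hXr (hS ▸ hSX)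
  · refine jLe_of_sub_eq_comp_comp hTp (R := Pp) ?_ ?_
    · rw [hPp_proj.isIdempotentElem.reflection_mul_self]
      exact ContinuousLinearMap.IsPositive.of_isStarProjection hPp_proj
    · rw [hS, add_sub_cancel_right]
  · exact jLe_of_jLe_add hJ hcompl.symm hSm hSm_range hSp_range hY hYr
      (by rwa [hS, add_comm] at hYS)

/-- `S₊ = TP₊T⁺` is the `≤_J`-minimum of the J-selfadjoint operators `X`
with `S ≤_J X` and `R(X) ⊆ M₊`, and `-S₋ = TP₋T⁺` is the `≤_J`-maximum of the
J-selfadjoint operators `Y` with `Y ≤_J S` and `R(Y) ⊆ M₋`. -/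
theorem jframe_extremal_jpositive_parts
    (J : H →L[ℂ] H) (hJ : IsFundSym J) (f : I → H)
    (T : lp (fun _ : I => ℂ) 2 →L[ℂ] H)
    (hT : ∀ i, T (lp.single 2 i (1:ℂ)) = f i)
    (hTsurj : Function.Surjective T)
    (Pp Pm : lp (fun _ : I => ℂ) 2 →L[ℂ] lp (fun _ : I => ℂ) 2)
    (hPp : ∀ (x : lp (fun _ : I => ℂ) 2) (i : I), Pp x i = if posIdx J f i then x i else 0)
    (hPm : ∀ (x : lp (fun _ : I => ℂ) 2) (i : I), Pm x i = if posIdx J f i then 0 else x i)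
    (hJF : MaxUnifJPos J (LinearMap.range (T.comp Pp : lp (fun _ : I => ℂ) 2 →ₗ[ℂ] H)) ∧
      MaxUnifJNeg J (LinearMap.range (T.comp Pm : lp (fun _ : I => ℂ) 2 →ₗ[ℂ] H)))
    (Tp : H →L[ℂ] lp (fun _ : I => ℂ) 2)
    (hTp : ∀ (x : lp (fun _ : I => ℂ) 2) (y : H), kre J (T x) y = kre (Pp - Pm) x (Tp y)) :
    (IsJSelfAdj J (T.comp (Pp.comp Tp)) ∧
      JLe J (T.comp Tp) (T.comp (Pp.comp Tp)) ∧
      LinearMap.range (T.comp (Pp.comp Tp) : H →ₗ[ℂ] H) ≤ LinearMap.range (T.comp Pp : lp (fun _ : I => ℂ) 2 →ₗ[ℂ] H) ∧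
      (∀ X : H →L[ℂ] H, IsJSelfAdj J X → JLe J (T.comp Tp) X →
        LinearMap.range (X : H →ₗ[ℂ] H) ≤ LinearMap.range (T.comp Pp : lp (fun _ : I => ℂ) 2 →ₗ[ℂ] H) →
          JLe J (T.comp (Pp.comp Tp)) X)) ∧
    (IsJSelfAdj J (T.comp (Pm.comp Tp)) ∧
      JLe J (T.comp (Pm.comp Tp)) (T.comp Tp) ∧
      LinearMap.range (T.comp (Pm.comp Tp) : H →ₗ[ℂ] H) ≤ LinearMap.range (T.comp Pm : lp (fun _ : I => ℂ) 2 →ₗ[ℂ] H) ∧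
      (∀ Y : H →L[ℂ] H, IsJSelfAdj J Y → JLe J Y (T.comp Tp) →
        LinearMap.range (Y : H →ₗ[ℂ] H) ≤ LinearMap.range (T.comp Pm : lp (fun _ : I => ℂ) 2 →ₗ[ℂ] H) →
          JLe J Y (T.comp (Pm.comp Tp)))) :=
  jframe_extremal_jpositive_parts_general J hJ f T hTsurj Pp Pm hPp hPm hJF Tp hTp
end
end

section
/- Let F = {f_i} be a J-frame for H with synthesis operator T. The following are equivalent: (1) F is a Parseval J-frame, i.e. TT⁺ = I; (2) T⁺ is a J-isometry ([T⁺x, T⁺y] = [x,y] for all x,y ∈ H); (3) T⁺T is the J-selfadjoint projection onto N(T)^{[⊥]}. -/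
noncomputable section

open scoped Classical

open Function

variable {H : Type*} [NormedAddCommGroup H] [InnerProductSpace ℂ H] [CompleteSpace H]
variable {I : Type*} [DecidableEq I]

/-!
Write `[·,·]` for the indefinite product on `H` and `[·,·]₂` for the one on `ℓ²(I)`. Both are
nondegenerate and Hermitian, so `T⁺` is also a left Krein adjoint: `[T⁺x, y]₂ = [x, Ty]`. Then
`[T⁺x, T⁺y]₂ = [x, TT⁺y]`, and by nondegeneracy this equals `[x, y]` for all `x, y` iff `TT⁺ = I`.
If `TT⁺ = I`, then `T⁺T` is idempotent, `[·,·]₂`-selfadjoint, and fixes every vector that is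
`[·,·]₂`-orthogonal to `N(T)`. Conversely, surjectivity of `T` makes `T⁺` injective, so
`T⁺TT⁺T = T⁺T` can be cancelled to `TT⁺T = T`, and then to `TT⁺ = I`.
-/

section FundamentalSymmetry

variable {E : Type*} [NormedAddCommGroup E] [InnerProductSpace ℂ E]

theorem kre_add_right (J : E →L[ℂ] E) (x y y' : E) : kre J x (y + y') = kre J x y + kre J x y' :=
  inner_add_right _ _ _

theorem kre_zero_right (J : E →L[ℂ] E) (x : E) : kre J x 0 = 0 :=
  inner_zero_right _

variable [CompleteSpace E] {J : E →L[ℂ] E}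

theorem IsFundSym.kre_conj (hJ : IsFundSym J) (x y : E) :
    kre J x y = starRingEnd ℂ (kre J y x) := by
  rw [kre, kre, inner_conj_symm]
  exact hJ.1.isSymmetric x y

theorem IsFundSym.injective (hJ : IsFundSym J) : Injective J :=
  LeftInverse.injective (g := J) fun x => congrArg (· x) hJ.2

theorem IsFundSym.ext_kre (hJ : IsFundSym J) {x x' : E} (h : ∀ y, kre J x y = kre J x' y) :
    x = x' := by
  have hJx : J (x - x') = 0 := by
    rw [← inner_self_eq_zero (𝕜 := ℂ)]
    simpa only [map_sub, kre, inner_sub_left, sub_eq_zero] using h (J (x - x'))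
  exact sub_eq_zero.mp (hJ.injective (hJx.trans (map_zero J).symm))

end FundamentalSymmetry

theorem isFundSym_sub_of_apply {ι : Type*} (p : ι → Prop) [DecidablePred p]
    (Pp Pm : lp (fun _ : ι => ℂ) 2 →L[ℂ] lp (fun _ : ι => ℂ) 2)
    (hPp : ∀ (x : lp (fun _ : ι => ℂ) 2) (i : ι), Pp x i = if p i then x i else 0)
    (hPm : ∀ (x : lp (fun _ : ι => ℂ) 2) (i : ι), Pm x i = if p i then 0 else x i) :
    IsFundSym (Pp - Pm) := by
  have happly : ∀ x i, (Pp - Pm) x i = if p i then x i else -x i := by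
    intro x i
    rw [sub_apply, lp.coeFn_sub, Pi.sub_apply, hPp, hPm]
    split_ifs <;> simp
  refine ⟨ContinuousLinearMap.isSelfAdjoint_iff_isSymmetric.mpr fun x y => ?_, ?_⟩
  · simp only [ContinuousLinearMap.coe_coe, lp.inner_eq_tsum, happly]
    congr 1
    funext i
    split_ifs <;> simp
  · ext x i
    simp only [ContinuousLinearMap.comp_apply, ContinuousLinearMap.id_apply, happly]
    split_ifs <;> simp

section KreinAdjoint

variable {E F : Type*} [NormedAddCommGroup E] [InnerProductSpace ℂ E] [CompleteSpace E]
  [NormedAddCommGroup F] [InnerProductSpace ℂ F] [CompleteSpace F]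
  {J : E →L[ℂ] E} {J' : F →L[ℂ] F} {T : F →L[ℂ] E} {Tp : E →L[ℂ] F}

theorem kre_adjoint_left (hJ : IsFundSym J) (hJ' : IsFundSym J')
    (hTp : ∀ x y, kre J (T x) y = kre J' x (Tp y)) (x : E) (y : F) :
    kre J' (Tp x) y = kre J x (T y) := by
  rw [hJ'.kre_conj, ← hTp, ← hJ.kre_conj]

theorem isJSelfAdj_adjoint_comp (hJ : IsFundSym J) (hJ' : IsFundSym J')
    (hTp : ∀ x y, kre J (T x) y = kre J' x (Tp y)) : IsJSelfAdj J' (Tp.comp T) := fun x y => by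
  rw [ContinuousLinearMap.comp_apply, ContinuousLinearMap.comp_apply,
    kre_adjoint_left hJ hJ' hTp, hTp]

omit [CompleteSpace F] in
theorem adjoint_injective_of_surjective (hJ : IsFundSym J)
    (hTp : ∀ x y, kre J (T x) y = kre J' x (Tp y)) (hT : Surjective T) : Injective Tp := by
  refine (injective_iff_map_eq_zero Tp).mpr fun x hx => hJ.ext_kre fun y => ?_
  obtain ⟨w, rfl⟩ := hT y
  rw [hJ.kre_conj, hTp, hx, kre_zero_right, hJ.kre_conj, kre_zero_right, map_zero]

theorem comp_adjoint_eq_id_iff_isometry (hJ : IsFundSym J) (hJ' : IsFundSym J')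
    (hTp : ∀ x y, kre J (T x) y = kre J' x (Tp y)) :
    T.comp Tp = ContinuousLinearMap.id ℂ E ↔ ∀ x y, kre J' (Tp x) (Tp y) = kre J x y := by
  simp only [kre_adjoint_left hJ hJ' hTp]
  refine ⟨fun h x y => by rw [← ContinuousLinearMap.comp_apply, h, ContinuousLinearMap.id_apply],
    fun h => ContinuousLinearMap.ext fun y => hJ.ext_kre fun z => ?_⟩
  change kre J (T (Tp y)) z = kre J y z
  rw [hJ.kre_conj, h, ← hJ.kre_conj]

theorem range_adjoint_comp_of_comp_adjoint_eq_id (hJ : IsFundSym J) (hJ' : IsFundSym J')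
    (hTp : ∀ x y, kre J (T x) y = kre J' x (Tp y)) (hid : ∀ y, T (Tp y) = y) :
    LinearMap.range (Tp.comp T).toLinearMap = JorthCompanion J' (LinearMap.ker T.toLinearMap) := by
  apply le_antisymm
  · rintro _ ⟨z, rfl⟩ s (hs : T s = 0)
    change kre J' (Tp (T z)) s = 0
    rw [kre_adjoint_left hJ hJ' hTp, hs, kre_zero_right]
  · intro x hx
    refine ⟨x, hJ'.ext_kre fun s => ?_⟩
    -- `s - T⁺Ts ∈ N(T)`, so only the component `T⁺Ts` of `s` is seen by `x`.
    have hker : s - Tp (T s) ∈ LinearMap.ker T.toLinearMap := by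
      change T (s - Tp (T s)) = 0
      rw [map_sub, hid, sub_self]
    change kre J' (Tp (T x)) s = kre J' x s
    rw [← add_sub_cancel (Tp (T s)) s, kre_add_right, kre_add_right, hx _ hker]
    simp only [kre_adjoint_left hJ hJ' hTp, ← hTp, map_sub, hid, sub_self, kre_zero_right]

theorem comp_adjoint_eq_id_iff_projection (hJ : IsFundSym J) (hJ' : IsFundSym J')
    (hTp : ∀ x y, kre J (T x) y = kre J' x (Tp y)) (hT : Surjective T) :
    T.comp Tp = ContinuousLinearMap.id ℂ E ↔
      ((Tp.comp T).comp (Tp.comp T) = Tp.comp T ∧ IsJSelfAdj J' (Tp.comp T) ∧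
        LinearMap.range (Tp.comp T).toLinearMap =
          JorthCompanion J' (LinearMap.ker T.toLinearMap)) := by
  constructor
  · intro h
    have hid : ∀ y, T (Tp y) = y := fun y => congrArg (· y) h
    refine ⟨?_, isJSelfAdj_adjoint_comp hJ hJ' hTp,
      range_adjoint_comp_of_comp_adjoint_eq_id hJ hJ' hTp hid⟩
    ext x
    simp only [ContinuousLinearMap.comp_apply, hid]
  · rintro ⟨hidem, -, -⟩
    have hTTpT : T.comp (Tp.comp T) = T := ContinuousLinearMap.ext fun x =>
      adjoint_injective_of_surjective hJ hTp hT (congrArg (· x) hidem)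
    exact ContinuousLinearMap.ext fun y => by
      obtain ⟨w, rfl⟩ := hT y
      exact congrArg (· w) hTTpT

end KreinAdjoint

theorem parseval_jframe_tfae_general
    (J : H →L[ℂ] H) (hJ : IsFundSym J) (f : I → H)
    (T : lp (fun _ : I => ℂ) 2 →L[ℂ] H)
    (hTsurj : Function.Surjective T)
    (Pp Pm : lp (fun _ : I => ℂ) 2 →L[ℂ] lp (fun _ : I => ℂ) 2)
    (hPp : ∀ (x : lp (fun _ : I => ℂ) 2) (i : I), Pp x i = if posIdx J f i then x i else 0)
    (hPm : ∀ (x : lp (fun _ : I => ℂ) 2) (i : I), Pm x i = if posIdx J f i then 0 else x i)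
    (Tp : H →L[ℂ] lp (fun _ : I => ℂ) 2)
    (hTp : ∀ (x : lp (fun _ : I => ℂ) 2) (y : H), kre J (T x) y = kre (Pp - Pm) x (Tp y)) :
    (T.comp Tp = ContinuousLinearMap.id ℂ H ↔
        ∀ x y : H, kre (Pp - Pm) (Tp x) (Tp y) = kre J x y) ∧
      (T.comp Tp = ContinuousLinearMap.id ℂ H ↔
        ((Tp.comp T).comp (Tp.comp T) = Tp.comp T ∧
          IsJSelfAdj (Pp - Pm) (Tp.comp T) ∧
          LinearMap.range (Tp.comp T).toLinearMap =
            JorthCompanion (Pp - Pm) (LinearMap.ker T.toLinearMap))) := by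
  have hJ₂ : IsFundSym (Pp - Pm) := isFundSym_sub_of_apply (posIdx J f) Pp Pm hPp hPm
  exact ⟨comp_adjoint_eq_id_iff_isometry hJ hJ₂ hTp,
    comp_adjoint_eq_id_iff_projection hJ hJ₂ hTp hTsurj⟩

/-- TFAE: (1) `TT⁺ = I` (Parseval J-frame); (2) `T⁺` is a J-isometry;
(3) `T⁺T` is the J-selfadjoint projection onto `N(T)^[⊥]`. -/
theorem parseval_jframe_tfae
    (J : H →L[ℂ] H) (hJ : IsFundSym J) (f : I → H)
    (T : lp (fun _ : I => ℂ) 2 →L[ℂ] H)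
    (hT : ∀ i, T (lp.single 2 i (1:ℂ)) = f i)
    (hTsurj : Function.Surjective T)
    (Pp Pm : lp (fun _ : I => ℂ) 2 →L[ℂ] lp (fun _ : I => ℂ) 2)
    (hPp : ∀ (x : lp (fun _ : I => ℂ) 2) (i : I), Pp x i = if posIdx J f i then x i else 0)
    (hPm : ∀ (x : lp (fun _ : I => ℂ) 2) (i : I), Pm x i = if posIdx J f i then 0 else x i)
    (hJF : MaxUnifJPos J (LinearMap.range (T.comp Pp).toLinearMap) ∧
      MaxUnifJNeg J (LinearMap.range (T.comp Pm).toLinearMap))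
    (Tp : H →L[ℂ] lp (fun _ : I => ℂ) 2)
    (hTp : ∀ (x : lp (fun _ : I => ℂ) 2) (y : H), kre J (T x) y = kre (Pp - Pm) x (Tp y)) :
    (T.comp Tp = ContinuousLinearMap.id ℂ H ↔
        ∀ x y : H, kre (Pp - Pm) (Tp x) (Tp y) = kre J x y) ∧
      (T.comp Tp = ContinuousLinearMap.id ℂ H ↔
        ((Tp.comp T).comp (Tp.comp T) = Tp.comp T ∧
          IsJSelfAdj (Pp - Pm) (Tp.comp T) ∧
          LinearMap.range (Tp.comp T).toLinearMap =
            JorthCompanion (Pp - Pm) (LinearMap.ker T.toLinearMap))) :=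
  parseval_jframe_tfae_general J hJ f T hTsurj Pp Pm hPp hPm Tp hTp
end
end
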